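/- (4-Permutability for (F,Η)) Let F be an r-sort species admitting a composition operator Η. If Ω1, Ω2, Ω3, Ω4 are pairwise componentwise-disjoint r-tuples of finite sets, then all Η-bracketings of F[Ω1], F[Ω2], F[Ω3], F[Ω4] are equal to each other as subsets of F[Ω1⨿Ω2⨿Ω3⨿Ω4]. -/

import Mathlib

/-!
By (D1) applied to a decomposition and itself,
`η(F[Ω₁] × F[Ω₂]) = η(η(F[Ω₁] × F[∅]) × η(F[∅] × F[Ω₂]))`. If `F[∅] = ∅`, every `η`-image is
therefore empty, and so is every bracketing of at least two pieces. Otherwise injectivity of `η`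
yields the unit laws `η(F[∅] × F[Ω]) = F[Ω] = η(F[Ω] × F[∅])`, and by induction every bracketing
of the `F[Ω_i]`, `i ∈ u`, equals the bracketing-free set `⋂_{p ⊆ u} η(F[Ω_p] × F[Ω_{u∖p}])`:
at a node `u = s ⨿ t`, (D1) for the decompositions `(Ω_s, Ω_t)` and `(Ω_{p∪q}, Ω_{u∖(p∪q)})`
identifies `η(η(F[Ω_p] × F[Ω_{s∖p}]) × η(F[Ω_q] × F[Ω_{t∖q}]))` with the elements splitting
along both `s` and `p ∪ q`, and `η` commutes with the intersections since it is injective.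
-/

open scoped Classical

noncomputable section

/-- Objects of `Set^r`: `r`-tuples of finite sets (realized as finite subsets of `ℕ`). -/
abbrev Obj (r : ℕ) := Fin r → Finset ℕ

variable {r : ℕ}

/-- The `r`-tuple of empty sets. -/
def oEmpty (r : ℕ) : Obj r := fun _ => ∅

/-- Componentwise union (the disjoint union `⨿` when the arguments are
componentwise disjoint). -/
def oUnion (Ω₁ Ω₂ : Obj r) : Obj r := fun i => Ω₁ i ∪ Ω₂ i

/-- Componentwise intersection. -/
def oInter (Ω₁ Ω₂ : Obj r) : Obj r := fun i => Ω₁ i ∩ Ω₂ i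

/-- Componentwise set difference. -/
def oDiff (Ω₁ Ω₂ : Obj r) : Obj r := fun i => Ω₁ i \ Ω₂ i

/-- Componentwise disjointness. -/
def oDisj (Ω₁ Ω₂ : Obj r) : Prop := ∀ i, Disjoint (Ω₁ i) (Ω₂ i)

/-- Componentwise containment. -/
def oSub (Ω₁ Ω₂ : Obj r) : Prop := ∀ i, Ω₁ i ⊆ Ω₂ i

/-- A morphism of `Set^r`: an `r`-tuple of bijections between the components. -/
def Mor (Ω₁ Ω₂ : Obj r) : Type := ∀ i, {x // x ∈ Ω₁ i} ≃ {x // x ∈ Ω₂ i}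

/-- The identity morphism. -/
def idMor (Ω : Obj r) : Mor Ω Ω := fun _ => Equiv.refl _

/-- Composition of morphisms. -/
def compMor {Ω₁ Ω₂ Ω₃ : Obj r} (f : Mor Ω₁ Ω₂) (g : Mor Ω₂ Ω₃) : Mor Ω₁ Ω₃ :=
  fun i => (f i).trans (g i)

/-- An `r`-sort species: a (covariant) functor from `Set^r` to the category of
finite sets and bijections.  The value `F[Ω]` is the finite set `obj Ω`, and the
action on a morphism `f` is encoded by the function `map f : ℕ → ℕ` (only its
values on `obj Ω₁` are relevant). -/
structure Species (r : ℕ) where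
  obj : Obj r → Finset ℕ
  map : ∀ {Ω₁ Ω₂ : Obj r}, Mor Ω₁ Ω₂ → ℕ → ℕ
  map_mem : ∀ {Ω₁ Ω₂ : Obj r} (f : Mor Ω₁ Ω₂), ∀ x ∈ obj Ω₁, map f x ∈ obj Ω₂
  map_id : ∀ (Ω : Obj r), ∀ x ∈ obj Ω, map (idMor Ω) x = x
  map_comp : ∀ {Ω₁ Ω₂ Ω₃ : Obj r} (f : Mor Ω₁ Ω₂) (g : Mor Ω₂ Ω₃), ∀ x ∈ obj Ω₁,
    map (compMor f g) x = map g (map f x)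

/-- The canonical identification of a disjoint union `s ∪ t` with the sum `s ⊕ t`. -/
def finsetSumEquiv {s t : Finset ℕ} (h : Disjoint s t) :
    {x // x ∈ s ∪ t} ≃ {x // x ∈ s} ⊕ {x // x ∈ t} :=
  (Equiv.subtypeEquivRight (fun x => by simp)).trans
    (Equiv.Set.union (s := (↑s : Set ℕ)) (t := (↑t : Set ℕ)) (by exact_mod_cast h))

/-- The disjoint union of two bijections, as a bijection between unions. -/
def finsetUnionEquiv {s t s' t' : Finset ℕ} (h : Disjoint s t) (h' : Disjoint s' t')
    (f : {x // x ∈ s} ≃ {x // x ∈ s'}) (g : {x // x ∈ t} ≃ {x // x ∈ t'}) :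
    {x // x ∈ s ∪ t} ≃ {x // x ∈ s' ∪ t'} :=
  (finsetSumEquiv h).trans ((f.sumCongr g).trans (finsetSumEquiv h').symm)

/-- The disjoint union `f ⨿ g` of two morphisms of `Set^r`. -/
def morUnion {Ω₁ Ω₂ Ω₁' Ω₂' : Obj r} (h : oDisj Ω₁ Ω₂) (h' : oDisj Ω₁' Ω₂')
    (f : Mor Ω₁ Ω₁') (g : Mor Ω₂ Ω₂') : Mor (oUnion Ω₁ Ω₂) (oUnion Ω₁' Ω₂') :=
  fun i => finsetUnionEquiv (h i) (h' i) (f i) (g i)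

/-- A composition operator `Η` for the species `F`: a natural transformation from
`F × F` (on pairs of componentwise disjoint objects) to `F ∘ ⨿` with injective
components, satisfying Axiom (D1). -/
structure CompOp {r : ℕ} (F : Species r) where
  η : Obj r → Obj r → ℕ × ℕ → ℕ
  mem_η : ∀ {Ω₁ Ω₂ : Obj r}, oDisj Ω₁ Ω₂ → ∀ x ∈ F.obj Ω₁, ∀ y ∈ F.obj Ω₂,
    η Ω₁ Ω₂ (x, y) ∈ F.obj (oUnion Ω₁ Ω₂)
  inj_η : ∀ {Ω₁ Ω₂ : Obj r}, oDisj Ω₁ Ω₂ →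
    Set.InjOn (η Ω₁ Ω₂) ((F.obj Ω₁ : Set ℕ) ×ˢ (F.obj Ω₂ : Set ℕ))
  natural : ∀ {Ω₁ Ω₂ Ω₁' Ω₂' : Obj r} (h : oDisj Ω₁ Ω₂) (h' : oDisj Ω₁' Ω₂')
    (f : Mor Ω₁ Ω₁') (g : Mor Ω₂ Ω₂'), ∀ x ∈ F.obj Ω₁, ∀ y ∈ F.obj Ω₂,
    F.map (morUnion h h' f g) (η Ω₁ Ω₂ (x, y)) = η Ω₁' Ω₂' (F.map f x, F.map g y)
  D1 : ∀ {Ω₁ Ω₂ Ω₃ Ω₄ : Obj r}, oDisj Ω₁ Ω₂ → oDisj Ω₃ Ω₄ →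
    oUnion Ω₁ Ω₂ = oUnion Ω₃ Ω₄ →
    η Ω₁ Ω₂ '' ((F.obj Ω₁ : Set ℕ) ×ˢ (F.obj Ω₂ : Set ℕ)) ∩
      η Ω₃ Ω₄ '' ((F.obj Ω₃ : Set ℕ) ×ˢ (F.obj Ω₄ : Set ℕ)) =
    η Ω₁ Ω₂ ''
      ((η (oInter Ω₁ Ω₃) (oInter Ω₁ Ω₄) ''
          ((F.obj (oInter Ω₁ Ω₃) : Set ℕ) ×ˢ (F.obj (oInter Ω₁ Ω₄) : Set ℕ))) ×ˢ
        (η (oInter Ω₂ Ω₃) (oInter Ω₂ Ω₄) ''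
          ((F.obj (oInter Ω₂ Ω₃) : Set ℕ) ×ˢ (F.obj (oInter Ω₂ Ω₄) : Set ℕ))))

/-- The set `F_Η[Ω]` of indecomposable elements of `F[Ω]`. -/
def indec (F : Species r) (E : CompOp F) (Ω : Obj r) : Set ℕ :=
  if Ω = oEmpty r then ∅
  else (F.obj Ω : Set ℕ) \
    ⋃ (p : Obj r × Obj r) (_ : oDisj p.1 p.2) (_ : p.1 ≠ oEmpty r) (_ : p.2 ≠ oEmpty r)
      (_ : oUnion p.1 p.2 = Ω),
      E.η p.1 p.2 '' ((F.obj p.1 : Set ℕ) ×ˢ (F.obj p.2 : Set ℕ))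

/-- The sets `F_Η^(k)[Ω]` of elements of `F[Ω]` consisting of exactly `k`
indecomposable components. -/
def indecK (F : Species r) (E : CompOp F) : ℕ → Obj r → Set ℕ
  | 0 => fun Ω => if Ω = oEmpty r then (F.obj (oEmpty r) : Set ℕ) else ∅
  | (k + 1) => fun Ω => ⋃ (Ω₁ : Obj r) (_ : oSub Ω₁ Ω),
      E.η Ω₁ (oDiff Ω Ω₁) '' ((indec F E Ω₁) ×ˢ (indecK F E k (oDiff Ω Ω₁)))

/-- `Ω_I`: the componentwise disjoint union of the family `Ωs` over the index set `s`. -/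
def bigU {ι : Type} [DecidableEq ι] (Ωs : ι → Obj r) (s : Finset ι) : Obj r :=
  fun i => s.biUnion (fun j => Ωs j i)

/-- `Brack F E Ωs leaf s B` says that `B` is an `Η`-bracketing of the sets
`leaf (Ωs i)`, `i ∈ s` (each occurring exactly once).  For `leaf Ω = F[Ω]` this is an
`Η`-bracketing of the `F[Ωs i]`; for `leaf = indec F E` it is an `Η`-bracketing of
the `F_Η[Ωs i]`. -/
inductive Brack (F : Species r) (E : CompOp F) {ι : Type} [DecidableEq ι]
    (Ωs : ι → Obj r) (leaf : Obj r → Set ℕ) : Finset ι → Set ℕ → Prop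
  | single (i : ι) : Brack F E Ωs leaf {i} (leaf (Ωs i))
  | node {s t : Finset ι} {B₁ B₂ : Set ℕ} :
      Disjoint s t → s.Nonempty → t.Nonempty →
      Brack F E Ωs leaf s B₁ → Brack F E Ωs leaf t B₂ →
      Brack F E Ωs leaf (s ∪ t) (E.η (bigU Ωs s) (bigU Ωs t) '' (B₁ ×ˢ B₂))

/-- A `Λ`-weight on `(F, Η)`: Axioms (W0), (W1), (W2). -/
structure Weight {r : ℕ} (F : Species r) (E : CompOp F) (Λ : Type) [CommRing Λ]
    [Algebra ℚ Λ] where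
  w : Obj r → ℕ → Λ
  W0 : ∀ x ∈ F.obj (oEmpty r), w (oEmpty r) x = 1
  W1 : ∀ {Ω Ω' : Obj r} (f : Mor Ω Ω'), ∀ x ∈ F.obj Ω, w Ω' (F.map f x) = w Ω x
  W2 : ∀ {Ω₁ Ω₂ : Obj r}, oDisj Ω₁ Ω₂ → ∀ x ∈ indec F E Ω₁, ∀ y ∈ F.obj Ω₂,
    w (oUnion Ω₁ Ω₂) (E.η Ω₁ Ω₂ (x, y)) = w Ω₁ x * w Ω₂ y

/-- The standard object `([n₁], …, [n_r])`, with `[n] = {1, …, n}`. -/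
def stdObj {r : ℕ} (n : Fin r → ℕ) : Obj r := fun i => Finset.Icc 1 (n i)

/-- The exponential generating function
`Σ_{n₁,…,n_r ≥ 0} Σ_{x ∈ S[([n₁],…,[n_r])]} w(x) z₁^{n₁} ⋯ z_r^{n_r}/(n₁! ⋯ n_r!)`
of a subfamily `S` of a species `F`, with respect to a weight `w`. -/
def GF {r : ℕ} {Λ : Type} [CommRing Λ] [Algebra ℚ Λ] (F : Species r)
    (S : Obj r → Set ℕ) (w : Obj r → ℕ → Λ) : MvPowerSeries (Fin r) Λ :=
  fun d => (algebraMap ℚ Λ (∏ i, (1 / (Nat.factorial (d i)) : ℚ))) *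
    ∑ x ∈ (F.obj (stdObj fun i => d i)).filter (fun x => x ∈ S (stdObj fun i => d i)),
      w (stdObj fun i => d i) x

/-- The exponential `exp f = Σ_{k ≥ 0} f^k / k!` of a multivariate formal power
series `f` with zero constant term (the coefficient of a given monomial only
receives contributions from `k` at most the total degree). -/
def mvExp {σ Λ : Type} [CommRing Λ] [Algebra ℚ Λ] (f : MvPowerSeries σ Λ) :
    MvPowerSeries σ Λ :=
  fun d => ∑ k ∈ Finset.range ((d.sum fun _ m => m) + 1),
    algebraMap ℚ Λ ((1 : ℚ) / (Nat.factorial k)) * MvPowerSeries.coeff d (f ^ k)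

/-- The logarithm `log f = Σ_{k ≥ 1} (-1)^{k+1} (f-1)^k / k` of a multivariate
formal power series `f` with constant term `1`. -/
def mvLog {σ Λ : Type} [CommRing Λ] [Algebra ℚ Λ] (f : MvPowerSeries σ Λ) :
    MvPowerSeries σ Λ :=
  fun d => ∑ k ∈ Finset.Icc 1 (d.sum fun _ m => m),
    algebraMap ℚ Λ ((-1 : ℚ) ^ (k + 1) / k) * MvPowerSeries.coeff d ((f - 1) ^ k)

/-- The refined generating function `G̃F_F(z₁,…,z_r,y)`, a power series in
`z₁, …, z_r` with coefficients that are polynomials in `y` (recorded via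
`Polynomial Λ`, the variable `y` being `Polynomial.X`):
`Σ_{n₁,…,n_r ≥ 0} Σ_k Σ_{x ∈ F_Η^(k)[([n₁],…,[n_r])]} y^k w(x) z₁^{n₁}⋯z_r^{n_r}/(n₁!⋯n_r!)`
(for fixed `n₁, …, n_r` only the `k ≤ n₁ + ⋯ + n_r` contribute, since
`F_Η^(k)[Ω] = ∅ for k > ‖Ω‖`). -/
def tGF {r : ℕ} {Λ : Type} [CommRing Λ] [Algebra ℚ Λ] (F : Species r) (E : CompOp F)
    (w : Obj r → ℕ → Λ) : MvPowerSeries (Fin r) (Polynomial Λ) :=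
  fun d => Polynomial.C (algebraMap ℚ Λ (∏ i, (1 / (Nat.factorial (d i)) : ℚ))) *
    ∑ k ∈ Finset.range ((∑ i, d i) + 1), Polynomial.X ^ k *
      Polynomial.C (∑ x ∈ (F.obj (stdObj fun i => d i)).filter
          (fun x => x ∈ indecK F E k (stdObj fun i => d i)),
        w (stdObj fun i => d i) x)

/-- The species `E(F_Η)` of sets of `F_Η`-structures:  `E(F_Η)[Ω]` consists of all
finite sets `{(x₁,Ω₁),…,(x_k,Ω_k)}` with `x_i ∈ F_Η[Ω_i]`, the `Ω_i` nonempty and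
pairwise componentwise disjoint, and `Ω₁ ⨿ ⋯ ⨿ Ω_k = Ω`. -/
def ESet {r : ℕ} (F : Species r) (E : CompOp F) (Ω : Obj r) :
    Set (Finset (ℕ × Obj r)) :=
  { s | (∀ p ∈ s, p.1 ∈ indec F E p.2 ∧ p.2 ≠ oEmpty r) ∧
        (∀ p ∈ s, ∀ q ∈ s, p ≠ q → oDisj p.2 q.2) ∧
        (∀ i, Ω i = s.biUnion (fun p => p.2 i)) }

/-- The bijection between a finite set and its image under a map injective on it. -/
def imageEquiv {u : Finset ℕ} (g : ℕ → ℕ) (hg : Set.InjOn g (u : Set ℕ)) :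
    {x // x ∈ u} ≃ {x // x ∈ u.image g} :=
  Equiv.ofBijective (fun x => ⟨g x, Finset.mem_image_of_mem g x.2⟩) (by
    constructor
    · rintro ⟨a, ha⟩ ⟨b, hb⟩ hab
      exact Subtype.ext (hg (by exact_mod_cast ha) (by exact_mod_cast hb)
        (congrArg Subtype.val hab))
    · rintro ⟨y, hy⟩
      rcases Finset.mem_image.mp hy with ⟨a, ha, rfl⟩
      exact ⟨⟨a, ha⟩, rfl⟩)

/-- The underlying function `ℕ → ℕ` of the `i`-th component of a morphism. -/
def apMor {Ω Ω' : Obj r} (f : Mor Ω Ω') (i : Fin r) (a : ℕ) : ℕ :=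
  if h : a ∈ Ω i then ((f i) ⟨a, h⟩ : ℕ) else a

/-- The componentwise image of a subobject `O ⊆ Ω` under a morphism `f : Ω → Ω'`. -/
def oImage {Ω Ω' : Obj r} (f : Mor Ω Ω') (O : Obj r) : Obj r :=
  fun i => (O i).image (apMor f i)

/-- The restriction of a morphism `f : Ω → Ω'` to a subobject `O ⊆ Ω`. -/
def restrictMor {Ω Ω' : Obj r} (f : Mor Ω Ω') {O : Obj r} (hO : oSub O Ω) :
    Mor O (oImage f O) :=
  fun i => imageEquiv (apMor f i) (by
    intro a ha b hb hab
    have ha' : a ∈ Ω i := hO i (by exact_mod_cast ha)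
    have hb' : b ∈ Ω i := hO i (by exact_mod_cast hb)
    have h1 : ((f i) ⟨a, ha'⟩ : ℕ) = ((f i) ⟨b, hb'⟩ : ℕ) := by
      simpa [apMor, dif_pos ha', dif_pos hb'] using hab
    have h2 := (f i).injective (Subtype.ext h1)
    exact congrArg Subtype.val h2)

/-- The induced action of a morphism `f : Ω → Ω'` on `E(F_Η)[Ω]`. -/
def Emap {r : ℕ} (F : Species r) {Ω Ω' : Obj r} (f : Mor Ω Ω')
    (s : Finset (ℕ × Obj r)) : Finset (ℕ × Obj r) :=
  s.image (fun p =>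
    if h : oSub p.2 Ω then (F.map (restrictMor f h) p.1, oImage f p.2) else p)

lemma Set.InjOn.image_iInter_prod_iInter {α β γ κ₁ κ₂ : Type*} [Nonempty κ₁] [Nonempty κ₂]
    {f : α × β → γ} {A : Set α} {B : Set β} (hf : Set.InjOn f (A ×ˢ B))
    {X : κ₁ → Set α} {Y : κ₂ → Set β} (hX : ∀ i, X i ⊆ A) (hY : ∀ j, Y j ⊆ B) :
    f '' ((⋂ i, X i) ×ˢ (⋂ j, Y j)) = ⋂ i, ⋂ j, f '' (X i ×ˢ Y j) := by
  have hprod : (⋂ i, X i) ×ˢ (⋂ j, Y j) = ⋂ k : κ₁ × κ₂, X k.1 ×ˢ Y k.2 := by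
    ext ⟨a, b⟩
    simp only [Set.mem_prod, Set.mem_iInter, Prod.forall]
    obtain ⟨i₀⟩ := ‹Nonempty κ₁›
    obtain ⟨j₀⟩ := ‹Nonempty κ₂›
    exact ⟨fun h i j => ⟨h.1 i, h.2 j⟩, fun h => ⟨fun i => (h i j₀).1, fun j => (h i₀ j).2⟩⟩
  rw [hprod]
  exact (Set.InjOn.image_iInter_eq (s := fun k : κ₁ × κ₂ => X k.1 ×ˢ Y k.2)
    (hf.mono (Set.iUnion_subset fun k => Set.prod_mono (hX k.1) (hY k.2)))).trans iInf_prod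

section ObjLemmas

lemma oUnion_oEmpty_left (Ω : Obj r) : oUnion (oEmpty r) Ω = Ω :=
  funext fun _ => Finset.empty_union _

lemma oUnion_oEmpty_right (Ω : Obj r) : oUnion Ω (oEmpty r) = Ω :=
  funext fun _ => Finset.union_empty _

lemma oDisj_oEmpty_left (Ω : Obj r) : oDisj (oEmpty r) Ω :=
  fun _ => Finset.disjoint_empty_left _

lemma oDisj_oEmpty_right (Ω : Obj r) : oDisj Ω (oEmpty r) :=
  fun _ => Finset.disjoint_empty_right _

lemma oInter_self (Ω : Obj r) : oInter Ω Ω = Ω :=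
  funext fun _ => Finset.inter_self _

lemma oDisj.oInter_eq_oEmpty {Ω₁ Ω₂ : Obj r} (h : oDisj Ω₁ Ω₂) : oInter Ω₁ Ω₂ = oEmpty r :=
  funext fun i => Finset.disjoint_iff_inter_eq_empty.mp (h i)

variable {ι : Type} [DecidableEq ι]

lemma bigU_empty (Ωs : ι → Obj r) : bigU Ωs ∅ = oEmpty r :=
  funext fun _ => Finset.biUnion_empty

lemma bigU_singleton (Ωs : ι → Obj r) (j : ι) : bigU Ωs {j} = Ωs j :=
  funext fun _ => Finset.singleton_biUnion

lemma bigU_union (Ωs : ι → Obj r) (s t : Finset ι) :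
    bigU Ωs (s ∪ t) = oUnion (bigU Ωs s) (bigU Ωs t) :=
  funext fun _ => Finset.union_biUnion

lemma oDisj_bigU {Ωs : ι → Obj r} (hd : ∀ i j, i ≠ j → oDisj (Ωs i) (Ωs j))
    {s t : Finset ι} (hst : Disjoint s t) : oDisj (bigU Ωs s) (bigU Ωs t) := fun i => by
  simp only [bigU, Finset.disjoint_biUnion_left, Finset.disjoint_biUnion_right]
  exact fun b hb a ha => hd a b (ne_of_mem_of_not_mem ha (Finset.disjoint_right.mp hst hb)) i

lemma oInter_bigU {Ωs : ι → Obj r} (hd : ∀ i j, i ≠ j → oDisj (Ωs i) (Ωs j))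
    (s t : Finset ι) : oInter (bigU Ωs s) (bigU Ωs t) = bigU Ωs (s ∩ t) := by
  funext i
  ext a
  simp only [oInter, bigU, Finset.mem_inter, Finset.mem_biUnion]
  constructor
  · rintro ⟨⟨j, hj, haj⟩, ⟨k, hk, hak⟩⟩
    obtain rfl : j = k := by_contra fun hjk => Finset.disjoint_left.mp (hd j k hjk i) haj hak
    exact ⟨j, ⟨hj, hk⟩, haj⟩
  · rintro ⟨j, ⟨hjs, hjt⟩, haj⟩
    exact ⟨⟨j, hjs, haj⟩, ⟨j, hjt, haj⟩⟩

end ObjLemmas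

namespace CompOp

variable {F : Species r} (E : CompOp F)

def decomp (Ω₁ Ω₂ : Obj r) : Set ℕ :=
  E.η Ω₁ Ω₂ '' ((F.obj Ω₁ : Set ℕ) ×ˢ (F.obj Ω₂ : Set ℕ))

lemma image_eta_subset {Ω₁ Ω₂ : Obj r} (h : oDisj Ω₁ Ω₂) {X Y : Set ℕ}
    (hX : X ⊆ F.obj Ω₁) (hY : Y ⊆ F.obj Ω₂) :
    E.η Ω₁ Ω₂ '' (X ×ˢ Y) ⊆ F.obj (oUnion Ω₁ Ω₂) := by
  rintro _ ⟨⟨x, y⟩, ⟨hx, hy⟩, rfl⟩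
  exact E.mem_η h x (hX hx) y (hY hy)

lemma decomp_subset {Ω₁ Ω₂ : Obj r} (h : oDisj Ω₁ Ω₂) :
    E.decomp Ω₁ Ω₂ ⊆ F.obj (oUnion Ω₁ Ω₂) :=
  E.image_eta_subset h subset_rfl subset_rfl

lemma decomp_eq_image_decomp_oEmpty {Ω₁ Ω₂ : Obj r} (h : oDisj Ω₁ Ω₂) :
    E.decomp Ω₁ Ω₂ =
      E.η Ω₁ Ω₂ '' (E.decomp Ω₁ (oEmpty r) ×ˢ E.decomp (oEmpty r) Ω₂) := by
  have hD1 := E.D1 h h rfl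
  rwa [Set.inter_self, oInter_self, oInter_self, h.oInter_eq_oEmpty,
    (oDisj.oInter_eq_oEmpty fun i => (h i).symm)] at hD1

lemma obj_prod_eq_decomp_prod {Ω₁ Ω₂ : Obj r} (h : oDisj Ω₁ Ω₂) :
    (F.obj Ω₁ : Set ℕ) ×ˢ (F.obj Ω₂ : Set ℕ) =
      E.decomp Ω₁ (oEmpty r) ×ˢ E.decomp (oEmpty r) Ω₂ := by
  have h₁ := E.decomp_subset (oDisj_oEmpty_right Ω₁)
  have h₂ := E.decomp_subset (oDisj_oEmpty_left Ω₂)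
  rw [oUnion_oEmpty_right] at h₁
  rw [oUnion_oEmpty_left] at h₂
  exact ((E.inj_η h).image_eq_image_iff subset_rfl (Set.prod_mono h₁ h₂)).mp
    (E.decomp_eq_image_decomp_oEmpty h)

lemma decomp_eq_empty {Ω₁ Ω₂ : Obj r} (h0 : F.obj (oEmpty r) = ∅) (h : oDisj Ω₁ Ω₂) :
    E.decomp Ω₁ Ω₂ = ∅ := by
  rw [E.decomp_eq_image_decomp_oEmpty h, decomp, h0]
  simp

lemma decomp_oEmpty_left (hne : (F.obj (oEmpty r)).Nonempty) (Ω : Obj r) :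
    E.decomp (oEmpty r) Ω = F.obj Ω := by
  refine (oUnion_oEmpty_left Ω ▸ E.decomp_subset (oDisj_oEmpty_left Ω)).antisymm fun y hy => ?_
  obtain ⟨e, he⟩ := hne
  have hey := Set.mk_mem_prod (Finset.mem_coe.mpr he) hy
  rw [E.obj_prod_eq_decomp_prod (oDisj_oEmpty_left Ω)] at hey
  exact hey.2

lemma decomp_oEmpty_right (hne : (F.obj (oEmpty r)).Nonempty) (Ω : Obj r) :
    E.decomp Ω (oEmpty r) = F.obj Ω := by
  refine (oUnion_oEmpty_right Ω ▸ E.decomp_subset (oDisj_oEmpty_right Ω)).antisymm fun x hx => ?_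
  obtain ⟨e, he⟩ := hne
  have hxe := Set.mk_mem_prod hx (Finset.mem_coe.mpr he)
  rw [E.obj_prod_eq_decomp_prod (oDisj_oEmpty_right Ω)] at hxe
  exact hxe.1

section Canonical

variable {ι : Type} [DecidableEq ι] (Ωs : ι → Obj r)

def split (u p : Finset ι) : Set ℕ :=
  E.decomp (bigU Ωs p) (bigU Ωs (u \ p))

def canonical (u : Finset ι) : Set ℕ :=
  ⋂ p : {p : Finset ι // p ⊆ u}, E.split Ωs u p

variable {Ωs}

lemma split_subset (hd : ∀ i j, i ≠ j → oDisj (Ωs i) (Ωs j)) {u p : Finset ι} (hp : p ⊆ u) :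
    E.split Ωs u p ⊆ F.obj (bigU Ωs u) := by
  have h := E.decomp_subset (oDisj_bigU hd (Finset.disjoint_sdiff (s := p) (t := u)))
  rwa [← bigU_union, Finset.union_sdiff_of_subset hp] at h

lemma canonical_singleton (hne : (F.obj (oEmpty r)).Nonempty) (j : ι) :
    E.canonical Ωs {j} = F.obj (Ωs j) := by
  have hsplit : ∀ p : {p : Finset ι // p ⊆ {j}}, E.split Ωs {j} p = F.obj (Ωs j) := by
    rintro ⟨p, hp⟩
    rcases Finset.subset_singleton_iff.mp hp with rfl | rfl
    · rw [split, Finset.sdiff_empty, bigU_empty, bigU_singleton, E.decomp_oEmpty_left hne]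
    · rw [split, Finset.sdiff_self, bigU_empty, bigU_singleton, E.decomp_oEmpty_right hne]
  have : Nonempty {p : Finset ι // p ⊆ {j}} := ⟨⟨∅, Finset.empty_subset _⟩⟩
  simp only [canonical, hsplit, Set.iInter_const]

lemma image_eta_split_prod_split (hd : ∀ i j, i ≠ j → oDisj (Ωs i) (Ωs j))
    {s t p q : Finset ι} (hst : Disjoint s t) (hp : p ⊆ s) (hq : q ⊆ t) :
    E.η (bigU Ωs s) (bigU Ωs t) '' (E.split Ωs s p ×ˢ E.split Ωs t q) =
      E.split Ωs (s ∪ t) s ∩ E.split Ωs (s ∪ t) (p ∪ q) := by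
  have hD1 := E.D1 (oDisj_bigU hd hst) (oDisj_bigU hd Finset.disjoint_sdiff) (by
    rw [← bigU_union, ← bigU_union, Finset.union_sdiff_of_subset (Finset.union_subset_union hp hq)])
  have hsp : s ∩ (p ∪ q) = p := by grind [Finset.disjoint_left]
  have htq : t ∩ (p ∪ q) = q := by grind [Finset.disjoint_left]
  have hsp' : s ∩ ((s ∪ t) \ (p ∪ q)) = s \ p := by grind [Finset.disjoint_left]
  have htq' : t ∩ ((s ∪ t) \ (p ∪ q)) = t \ q := by grind [Finset.disjoint_left]
  rw [oInter_bigU hd, oInter_bigU hd, oInter_bigU hd, oInter_bigU hd, hsp, htq, hsp', htq']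
    at hD1
  simp only [split, Finset.union_sdiff_cancel_left hst]
  exact hD1.symm

lemma image_eta_canonical_prod_canonical (hd : ∀ i j, i ≠ j → oDisj (Ωs i) (Ωs j))
    {s t : Finset ι} (hst : Disjoint s t) :
    E.η (bigU Ωs s) (bigU Ωs t) '' (E.canonical Ωs s ×ˢ E.canonical Ωs t) =
      E.canonical Ωs (s ∪ t) := by
  have : Nonempty {p : Finset ι // p ⊆ s} := ⟨⟨∅, Finset.empty_subset s⟩⟩
  have : Nonempty {q : Finset ι // q ⊆ t} := ⟨⟨∅, Finset.empty_subset t⟩⟩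
  rw [canonical, canonical, (E.inj_η (oDisj_bigU hd hst)).image_iInter_prod_iInter
    (fun p => E.split_subset hd p.2) (fun q => E.split_subset hd q.2)]
  refine (Set.iInter_congr fun p => Set.iInter_congr fun q =>
    E.image_eta_split_prod_split hd hst p.2 q.2).trans ?_
  ext z
  simp only [canonical, Set.mem_iInter, Set.mem_inter_iff, Subtype.forall]
  constructor
  · intro h w hw
    have hw' : w ∩ s ∪ w ∩ t = w := by grind
    simpa only [hw'] using (h (w ∩ s) Finset.inter_subset_right (w ∩ t) Finset.inter_subset_right).2
  · exact fun h p hp q hq => ⟨h s Finset.subset_union_left,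
      h (p ∪ q) (Finset.union_subset_union hp hq)⟩

end Canonical

end CompOp

namespace Brack

variable {F : Species r} {E : CompOp F} {ι : Type} [DecidableEq ι] {Ωs : ι → Obj r}

lemma subset_obj (hd : ∀ i j, i ≠ j → oDisj (Ωs i) (Ωs j)) {s : Finset ι} {B : Set ℕ}
    (hB : Brack F E Ωs (fun Ω => (F.obj Ω : Set ℕ)) s B) : B ⊆ F.obj (bigU Ωs s) := by
  induction hB with
  | single i => rw [bigU_singleton]
  | node hst _ _ _ _ ih₁ ih₂ =>
    rw [bigU_union]
    exact E.image_eta_subset (oDisj_bigU hd hst) ih₁ ih₂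

lemma eq_empty_of_obj_oEmpty_eq_empty (hd : ∀ i j, i ≠ j → oDisj (Ωs i) (Ωs j))
    (h0 : F.obj (oEmpty r) = ∅) {s : Finset ι} {B : Set ℕ}
    (hB : Brack F E Ωs (fun Ω => (F.obj Ω : Set ℕ)) s B) (hs : 1 < s.card) : B = ∅ := by
  cases hB with
  | single i => simp at hs
  | node hst _ _ hB₁ hB₂ =>
    rw [← Set.subset_empty_iff, ← E.decomp_eq_empty h0 (oDisj_bigU hd hst)]
    exact Set.image_mono (Set.prod_mono (hB₁.subset_obj hd) (hB₂.subset_obj hd))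

lemma eq_canonical (hd : ∀ i j, i ≠ j → oDisj (Ωs i) (Ωs j))
    (hne : (F.obj (oEmpty r)).Nonempty) {s : Finset ι} {B : Set ℕ}
    (hB : Brack F E Ωs (fun Ω => (F.obj Ω : Set ℕ)) s B) : B = E.canonical Ωs s := by
  induction hB with
  | single i => exact (E.canonical_singleton hne i).symm
  | node hst _ _ _ _ ih₁ ih₂ => rw [ih₁, ih₂, E.image_eta_canonical_prod_canonical hd hst]

end Brack

theorem stmt4_general {r : ℕ} (F : Species r) (E : CompOp F)
    (Ωs : Fin 4 → Obj r) (hd : ∀ i j, i ≠ j → oDisj (Ωs i) (Ωs j))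
    (B₁ B₂ : Set ℕ)
    (hB₁ : Brack F E Ωs (fun Ω => (F.obj Ω : Set ℕ)) Finset.univ B₁)
    (hB₂ : Brack F E Ωs (fun Ω => (F.obj Ω : Set ℕ)) Finset.univ B₂) :
    B₁ = B₂ := by
  rcases (F.obj (oEmpty r)).eq_empty_or_nonempty with h0 | hne
  · have hcard : 1 < (Finset.univ : Finset (Fin 4)).card := by simp
    rw [hB₁.eq_empty_of_obj_oEmpty_eq_empty hd h0 hcard,
      hB₂.eq_empty_of_obj_oEmpty_eq_empty hd h0 hcard]
  · rw [hB₁.eq_canonical hd hne, hB₂.eq_canonical hd hne]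

/-- 4-Permutability for `(F, Η)`: all `Η`-bracketings of
`F[Ω₁], F[Ω₂], F[Ω₃], F[Ω₄]` are equal to each other. -/
theorem stmt4 {r : ℕ} (hr : 0 < r) (F : Species r) (E : CompOp F)
    (hF : ∃ Ω : Obj r, (F.obj Ω).Nonempty)
    (Ωs : Fin 4 → Obj r) (hd : ∀ i j, i ≠ j → oDisj (Ωs i) (Ωs j))
    (B₁ B₂ : Set ℕ)
    (hB₁ : Brack F E Ωs (fun Ω => (F.obj Ω : Set ℕ)) Finset.univ B₁)
    (hB₂ : Brack F E Ωs (fun Ω => (F.obj Ω : Set ℕ)) Finset.univ B₂) :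
    B₁ = B₂ :=
  stmt4_general F E Ωs hd B₁ B₂ hB₁ hB₂

end
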